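/- Under Assumption 1, for every x₀ in the maximal robust region of uniform attraction R₀, the running-cost value W(x₀) = sup_π Σ_{i=0}^{∞} ln(g(φ_{x₀}^π(i)) + 1) is finite. -/

import Mathlib

open Metric Set Filter MeasureTheory

noncomputable section

abbrev St (n : ℕ) := EuclideanSpace ℝ (Fin n)

/-- Trajectory of the perturbed discrete-time system. -/
def traj {n m : ℕ} (f : St n → St m → St n) (x₀ : St n) (π : ℕ → St m) : ℕ → St n
  | 0 => x₀
  | k + 1 => f (traj f x₀ π k) (π k)

/-- A perturbation input policy takes values in `D`. -/
def IsPolicy {m : ℕ} (D : Set (St m)) (π : ℕ → St m) : Prop := ∀ k, π k ∈ D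

/-- Maximal robust region of attraction. -/
def RoA {n m : ℕ} (f : St n → St m → St n) (D : Set (St m)) (X : Set (St n)) : Set (St n) :=
  {x₀ | ∀ π, IsPolicy D π →
    (∀ k, traj f x₀ π k ∈ X) ∧ Tendsto (fun k => traj f x₀ π k) atTop (nhds 0)}

/-- `f` is a polynomial map in `(x, d)`. -/
def IsPolyMap2 {n m : ℕ} (f : St n → St m → St n) : Prop :=
  ∃ p : Fin n → MvPolynomial (Fin n ⊕ Fin m) ℝ,
    ∀ x d i, f x d i = MvPolynomial.eval (Sum.elim x d) (p i)

/-- A real-valued polynomial function on the state space. -/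
def IsPolyFun {n : ℕ} (g : St n → ℝ) : Prop :=
  ∃ p : MvPolynomial (Fin n) ℝ, ∀ x, g x = MvPolynomial.eval x p

/-- Assumption 1: uniform local exponential stability. -/
def Assumption1 {n m : ℕ} (f : St n → St m → St n) (D : Set (St m)) (X : Set (St n)) : Prop :=
  ∃ M r lam : ℝ, 0 < M ∧ 0 < r ∧ 0 < lam ∧ lam < 1 ∧ closedBall (0 : St n) r ⊆ X ∧
    ∀ x₀ ∈ closedBall (0 : St n) r, ∀ π, IsPolicy D π →
      ∀ k, ‖traj f x₀ π k‖ ≤ lam ^ k * M * ‖x₀‖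

/-- Maximal robust region of uniform attraction (with ball radius `ε`). -/
def R0 {n m : ℕ} (f : St n → St m → St n) (D : Set (St m)) (X : Set (St n)) (ε : ℝ) :
    Set (St n) :=
  {x₀ | (∃ δ > 0, ∀ π, IsPolicy D π → ∀ k, δ < infDist (traj f x₀ π k) Xᶜ) ∧
        (∃ K : ℕ, ∀ π, IsPolicy D π →
            ∃ k, 0 < k ∧ k ≤ K ∧ traj f x₀ π k ∈ closedBall (0 : St n) ε)}

/-- Extended-real logarithm with the convention `ln 0 = -∞`. -/
def elog (t : ℝ) : EReal := if t = 0 then ⊥ else (Real.log t : EReal)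

/-- The value function `V`. -/
def Vval {n m nX : ℕ} (f : St n → St m → St n) (D : Set (St m))
    (hX : Fin nX → St n → ℝ) (g : St n → ℝ) (x : St n) : EReal :=
  ⨆ π ∈ {π : ℕ → St m | IsPolicy D π}, ⨆ k : ℕ,
    ((∑ i ∈ Finset.range k, Real.log (g (traj f x π i) + 1) : ℝ) : EReal)
      - ⨅ j : Fin nX, elog (max (1 - hX j (traj f x π k)) 0)

/-- The Kruzhkov transformed value function `v = 1 - e^{-V}` (with `e^{-∞} = 0`). -/
def vval {n m nX : ℕ} (f : St n → St m → St n) (D : Set (St m))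
    (hX : Fin nX → St n → ℝ) (g : St n → ℝ) (x : St n) : ℝ :=
  if Vval f D hX g x = ⊤ then 1 else 1 - Real.exp (-(Vval f D hX g x).toReal)

/-- `w` is a (bounded continuous) solution of the Bellman equation. -/
def IsBellmanSolution {n m nX : ℕ} (f : St n → St m → St n) (D : Set (St m))
    (hX : Fin nX → St n → ℝ) (g : St n → ℝ) (w : St n → ℝ) : Prop :=
  (∀ x, min (sInf {y : ℝ | ∃ d ∈ D, y = w x - w (f x d) - g x * (1 - w x)})
            (w x - 1 + ⨅ j : Fin nX, max (1 - hX j x) 0) = 0) ∧ w 0 = 0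

/-! The region `R0` forces every admissible trajectory to stay in the bounded set `X` and to enter
the ball of radius `ε ≤ r` before a time `K` independent of the policy; from then on Assumption 1
makes it decay like `lam ^ k`. Together this gives `‖φ(k)‖ ≤ C lam ^ k` for all `k`, uniformly in
the policy. Since `g` is a polynomial vanishing at `0`, it is Lipschitz on the bounded set `X`, so
`ln (g x + 1) ≤ g x ≤ L ‖x‖` along trajectories, and the running cost is dominated by the
geometric series `L C / (1 - lam)`. -/

theorem IsPolyFun.contDiff {n : ℕ} {g : St n → ℝ} (hg : IsPolyFun g) : ContDiff ℝ 1 g := by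
  obtain ⟨p, hp⟩ := hg
  have hg_eq : g = fun x ↦ MvPolynomial.eval
      ((WithLp.linearEquiv 2 ℝ (Fin n → ℝ)).toLinearMap x) p := funext hp
  rw [hg_eq]
  exact (AnalyticOnNhd.eval_linearMap _ p).contDiff

theorem LocallyLipschitz.exists_le_mul_norm_of_isBounded {E : Type*} [NormedAddCommGroup E]
    [ProperSpace E] {g : E → ℝ} (hg : LocallyLipschitz g) (hg0 : g 0 = 0) {S : Set E}
    (hS : Bornology.IsBounded S) : ∃ L : NNReal, ∀ x ∈ S, g x ≤ L * ‖x‖ := by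
  obtain ⟨R, hR, hSR⟩ := hS.subset_closedBall_lt 0 0
  obtain ⟨L, hL⟩ :=
    hg.locallyLipschitzOn.exists_lipschitzOnWith_of_compact (isCompact_closedBall 0 R)
  refine ⟨L, fun x hx ↦ ?_⟩
  calc g x ≤ dist (g x) (g 0) := by rw [hg0, Real.dist_eq, sub_zero]; exact le_abs_self _
    _ ≤ L * dist x 0 := hL.dist_le_mul x (hSR hx) 0 (mem_closedBall_self hR.le)
    _ = L * ‖x‖ := by rw [dist_zero_right]

theorem le_mul_pow_of_le_of_le_mul_pow_add {a : ℕ → ℝ} {R B q : ℝ} {k₀ K : ℕ} (hq0 : 0 < q)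
    (hq1 : q ≤ 1) (hB : 0 ≤ B) (hk₀ : k₀ ≤ K) (hR : ∀ i, a i ≤ R)
    (htail : ∀ j, a (k₀ + j) ≤ B * q ^ j) (i : ℕ) : a i ≤ max R B / q ^ K * q ^ i := by
  have hqK : 0 < q ^ K := pow_pos hq0 K
  rw [div_mul_eq_mul_div, le_div_iff₀ hqK]
  have hRB : 0 ≤ max R B := hB.trans (le_max_right R B)
  rcases lt_or_ge i k₀ with hi | hi
  · calc a i * q ^ K ≤ max R B * q ^ K :=
          mul_le_mul_of_nonneg_right ((hR i).trans (le_max_left R B)) hqK.le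
      _ ≤ max R B * q ^ i :=
          mul_le_mul_of_nonneg_left (pow_le_pow_of_le_one hq0.le hq1 (by omega)) hRB
  · obtain ⟨j, rfl⟩ := Nat.exists_eq_add_of_le hi
    calc a (k₀ + j) * q ^ K ≤ B * q ^ j * q ^ k₀ :=
          mul_le_mul (htail j) (pow_le_pow_of_le_one hq0.le hq1 hk₀) hqK.le (by positivity)
      _ = B * q ^ (k₀ + j) := by ring
      _ ≤ max R B * q ^ (k₀ + j) := by gcongr; exact le_max_right R B

theorem ENNReal.tsum_ofReal_le_of_le_mul_pow {u : ℕ → ℝ} {c q : ℝ} (hq0 : 0 ≤ q) (hq1 : q < 1)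
    (hu : ∀ i, u i ≤ c * q ^ i) : ∑' i, ENNReal.ofReal (u i) ≤ ENNReal.ofReal (c / (1 - q)) :=
  calc ∑' i, ENNReal.ofReal (u i) ≤ ∑' i, ENNReal.ofReal c * ENNReal.ofReal q ^ i :=
        ENNReal.tsum_le_tsum fun i ↦ by
          rw [← ENNReal.ofReal_pow hq0, ← ENNReal.ofReal_mul' (by positivity)]
          exact ENNReal.ofReal_le_ofReal (hu i)
    _ = ENNReal.ofReal (c / (1 - q)) := by
        rw [ENNReal.tsum_mul_left, ENNReal.tsum_geometric, ← ENNReal.ofReal_one,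
          ← ENNReal.ofReal_sub _ hq0, ← div_eq_mul_inv,
          ENNReal.ofReal_div_of_pos (by linarith)]

theorem Real.log_add_one_le_self {x : ℝ} (hx : 0 ≤ x) : Real.log (x + 1) ≤ x := by
  linarith [Real.log_le_sub_one_of_pos (by linarith : 0 < x + 1)]

section Trajectories

variable {n m : ℕ} {f : St n → St m → St n} {D : Set (St m)} {X : Set (St n)} {x₀ : St n}
  {π : ℕ → St m} {ε : ℝ}

theorem traj_add (f : St n → St m → St n) (x₀ : St n) (π : ℕ → St m) (k j : ℕ) :
    traj f x₀ π (k + j) = traj f (traj f x₀ π k) (fun i ↦ π (k + i)) j := by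
  induction j with
  | zero => rfl
  | succ j ih => exact congrArg (f · (π (k + j))) ih

theorem traj_mem_of_mem_R0 (hx₀ : x₀ ∈ R0 f D X ε) (hπ : IsPolicy D π) (k : ℕ) :
    traj f x₀ π k ∈ X := by
  obtain ⟨⟨δ, hδ, hdist⟩, -⟩ := hx₀
  by_contra hk
  have := hdist π hπ k
  rw [infDist_zero_of_mem hk] at this
  linarith

theorem exists_norm_traj_le_mul_pow_of_mem_R0 {M r lam : ℝ} (hXbdd : Bornology.IsBounded X)
    (hM : 0 ≤ M) (hεr : ε ≤ r) (hlam0 : 0 < lam) (hlam1 : lam ≤ 1)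
    (hstab : ∀ x₀ ∈ closedBall (0 : St n) r, ∀ π, IsPolicy D π →
      ∀ k, ‖traj f x₀ π k‖ ≤ lam ^ k * M * ‖x₀‖)
    (hx₀ : x₀ ∈ R0 f D X ε) :
    ∃ C, ∀ π, IsPolicy D π → ∀ k, ‖traj f x₀ π k‖ ≤ C * lam ^ k := by
  obtain ⟨R, hXR⟩ := hXbdd.subset_closedBall 0
  obtain ⟨K, hK⟩ := hx₀.2
  refine ⟨max R (M * ε) / lam ^ K, fun π hπ ↦ ?_⟩
  obtain ⟨k₀, -, hk₀K, hk₀ball⟩ := hK π hπ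
  have hk₀ε : ‖traj f x₀ π k₀‖ ≤ ε := mem_closedBall_zero_iff.mp hk₀ball
  have hε : 0 ≤ ε := (norm_nonneg _).trans hk₀ε
  refine le_mul_pow_of_le_of_le_mul_pow_add hlam0 hlam1 (mul_nonneg hM hε) hk₀K
    (fun k ↦ mem_closedBall_zero_iff.mp (hXR (traj_mem_of_mem_R0 hx₀ hπ k))) fun j ↦ ?_
  rw [traj_add]
  calc _ ≤ lam ^ j * M * ‖traj f x₀ π k₀‖ :=
        hstab _ (mem_closedBall_zero_iff.mpr (hk₀ε.trans hεr)) _ (fun i ↦ hπ _) j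
    _ ≤ lam ^ j * M * ε := by gcongr
    _ = M * ε * lam ^ j := by ring

end Trajectories

theorem stmt13_general
    {n m : ℕ}
    (f : St n → St m → St n)
    (D : Set (St m))
    (X : Set (St n))
    (hXbdd : Bornology.IsBounded X)
    (M r lam : ℝ) (hM : 0 < M) (hr : 0 < r) (hlam0 : 0 < lam) (hlam1 : lam < 1)
    (hstab : ∀ x₀ ∈ closedBall (0 : St n) r, ∀ π, IsPolicy D π →
      ∀ k, ‖traj f x₀ π k‖ ≤ lam ^ k * M * ‖x₀‖)
    (g : St n → ℝ) (hgpoly : IsPolyFun g) (hgnn : ∀ x, 0 ≤ g x)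
    (hgzero : ∀ x : St n, g x = 0 ↔ x = 0)
    :
    ∀ x₀ ∈ R0 f D X (min (r / (2 * M)) (r / 2)),
      (⨆ π ∈ {π : ℕ → St m | IsPolicy D π},
        ∑' i : ℕ, ENNReal.ofReal (Real.log (g (traj f x₀ π i) + 1))) < ⊤ := by
  intro x₀ hx₀
  obtain ⟨L, hL⟩ := hgpoly.contDiff.locallyLipschitz.exists_le_mul_norm_of_isBounded
    ((hgzero 0).mpr rfl) hXbdd
  have hεr : min (r / (2 * M)) (r / 2) ≤ r := (min_le_right _ _).trans (by linarith)
  obtain ⟨C, hC⟩ :=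
    exists_norm_traj_le_mul_pow_of_mem_R0 hXbdd hM.le hεr hlam0 hlam1.le hstab hx₀
  refine (iSup₂_le fun π hπ ↦ ENNReal.tsum_ofReal_le_of_le_mul_pow (c := L * C) hlam0.le hlam1
    fun k ↦ ?_).trans_lt ENNReal.ofReal_lt_top
  calc Real.log (g (traj f x₀ π k) + 1) ≤ g (traj f x₀ π k) := Real.log_add_one_le_self (hgnn _)
    _ ≤ L * ‖traj f x₀ π k‖ := hL _ (traj_mem_of_mem_R0 hx₀ hπ k)
    _ ≤ L * (C * lam ^ k) := by gcongr; exact hC π hπ k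
    _ = L * C * lam ^ k := by ring

theorem stmt13
    {n m nX : ℕ} (hnX : 0 < nX)
    (f : St n → St m → St n) (hfpoly : IsPolyMap2 f)
    (D : Set (St m)) (hD : IsCompact D)
    (hf0 : ∀ d ∈ D, f 0 d = 0)
    (hX : Fin nX → St n → ℝ) (hXpoly : ∀ j, IsPolyFun (hX j))
    (hX0 : ∀ j, hX j 0 = 0) (hXpos : ∀ j, ∀ x : St n, x ≠ 0 → 0 < hX j x)
    (X : Set (St n)) (hXdef : X = {x | ∀ j, hX j x < 1})
    (hXbdd : Bornology.IsBounded X) (hXopen : IsOpen X)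
    (M r lam : ℝ) (hM : 0 < M) (hr : 0 < r) (hlam0 : 0 < lam) (hlam1 : lam < 1)
    (hball : closedBall (0 : St n) r ⊆ X)
    (hstab : ∀ x₀ ∈ closedBall (0 : St n) r, ∀ π, IsPolicy D π →
      ∀ k, ‖traj f x₀ π k‖ ≤ lam ^ k * M * ‖x₀‖)
    (g : St n → ℝ) (hgpoly : IsPolyFun g) (hgnn : ∀ x, 0 ≤ g x)
    (hgzero : ∀ x : St n, g x = 0 ↔ x = 0)
    :
    ∀ x₀ ∈ R0 f D X (min (r / (2 * M)) (r / 2)),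
      (⨆ π ∈ {π : ℕ → St m | IsPolicy D π},
        ∑' i : ℕ, ENNReal.ofReal (Real.log (g (traj f x₀ π i) + 1))) < ⊤ :=
  stmt13_general f D X hXbdd M r lam hM hr hlam0 hlam1 hstab g hgpoly hgnn hgzero
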